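/- arXiv:1309.3845 — 7 statements merged into one kernel-verified Lean document; each statement's English description precedes it below -/
import Mathlib

section
/- Let X ⊆ ℝ^d be r-regular (for every boundary point x there exist closed balls B_i, B_o of radius r containing x with B_i ⊆ X and the interior of B_o contained in the complement of X). Then for each x ∈ ∂X the inner and outer balls are unique: B_i = B(x − r n, r) and B_o = B(x + r n, r) for a unique unit vector n, i.e. the balls from the definition are tangent at x and determine a unique outward normal n(x). -/
open scoped RealInnerProductSpace

/-- Key geometric lemma: if a closed ball of radius `r` around `ci` lies in `X`,
the open ball of radius `r` around `co` lies in `Xᶜ`, and `x` is within `r` of both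
centers, then `x` is the midpoint of `ci` and `co`. -/
lemma midpoint_of_balls (d : ℕ) (r : ℝ) (hr : 0 < r)
    (X : Set (EuclideanSpace ℝ (Fin d))) (x ci co : EuclideanSpace ℝ (Fin d))
    (hci : x ∈ Metric.closedBall ci r) (hco : x ∈ Metric.closedBall co r)
    (hin : Metric.closedBall ci r ⊆ X)
    (hout : interior (Metric.closedBall co r) ⊆ Xᶜ) :
    x = midpoint ℝ ci co := by
  have hball : Metric.ball co r ⊆ Xᶜ := by
    rwa [interior_closedBall co hr.ne'] at hout
  -- the two balls are disjoint, so dist ci co ≥ 2r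
  have hdist : 2 * r ≤ dist ci co := by
    by_contra h
    push_neg at h
    have hm : midpoint ℝ ci co ∈ Metric.closedBall ci r := by
      rw [Metric.mem_closedBall, dist_midpoint_left]
      simp only [Real.norm_two]
      linarith
    have hm' : midpoint ℝ ci co ∈ Metric.ball co r := by
      rw [Metric.mem_ball, dist_midpoint_right]
      simp only [Real.norm_two]
      linarith
    exact hball hm' (hin hm)
  rw [Metric.mem_closedBall] at hci hco
  have htri : dist ci co ≤ dist ci x + dist x co := dist_triangle _ _ _
  rw [dist_comm ci x] at htri
  have h3 : dist ci co = 2 * r := by linarith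
  apply eq_midpoint_of_dist_eq_half
  · rw [dist_comm, h3]; linarith
  · rw [h3]; linarith

/-- For an `r`-regular set `X ⊆ ℝ^d`, at every boundary point `x` the inner and outer
balls of the definition are unique: there is a unique unit vector `n` such that every
pair of balls satisfying the defining conditions is `B(x - r n, r)`, `B(x + r n, r)`. -/
theorem rRegular_unique_normal (d : ℕ) (r : ℝ) (hr : 0 < r)
    (X : Set (EuclideanSpace ℝ (Fin d))) (hX : IsClosed X)
    (hreg : ∀ x ∈ frontier X, ∃ ci co : EuclideanSpace ℝ (Fin d),
      x ∈ Metric.closedBall ci r ∧ x ∈ Metric.closedBall co r ∧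
      Metric.closedBall ci r ⊆ X ∧ interior (Metric.closedBall co r) ⊆ Xᶜ)
    (x : EuclideanSpace ℝ (Fin d)) (hx : x ∈ frontier X) :
    ∃! n : EuclideanSpace ℝ (Fin d), ‖n‖ = 1 ∧
      ∀ ci co : EuclideanSpace ℝ (Fin d),
        x ∈ Metric.closedBall ci r → x ∈ Metric.closedBall co r →
        Metric.closedBall ci r ⊆ X → interior (Metric.closedBall co r) ⊆ Xᶜ →
        ci = x - r • n ∧ co = x + r • n := by
  obtain ⟨ci₀, co₀, h1, h2, h3, h4⟩ := hreg x hx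
  set n : EuclideanSpace ℝ (Fin d) := r⁻¹ • (co₀ - x) with hn
  have hxm : x = midpoint ℝ ci₀ co₀ := midpoint_of_balls d r hr X x ci₀ co₀ h1 h2 h3 h4
  -- a pair gives `x` as midpoint; extract center formulas
  have midsum : ∀ a b : EuclideanSpace ℝ (Fin d), x = midpoint ℝ a b → a + b = x + x := by
    intro a b hab
    rw [hab, midpoint_add_self]
  have hdist : dist x co₀ = r := by
    have hsum := midsum ci₀ co₀ hxm
    have h := dist_triangle ci₀ x co₀
    rw [dist_comm ci₀ x] at h
    have hco₀x : co₀ - x = x - ci₀ := by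
      have : ci₀ = x + x - co₀ := eq_sub_of_add_eq hsum
      rw [this]; abel
    have : dist x co₀ = dist ci₀ x := by
      have hneg : x - co₀ = ci₀ - x := by
        have := congrArg Neg.neg hco₀x
        simpa [neg_sub] using this
      rw [dist_eq_norm, dist_eq_norm, hneg]
    rw [Metric.mem_closedBall] at h1 h2
    -- need dist ci₀ co₀ = 2r; reuse disjointness
    have hball : Metric.ball co₀ r ⊆ Xᶜ := by
      rwa [interior_closedBall co₀ hr.ne'] at h4
    have hd : 2 * r ≤ dist ci₀ co₀ := by
      by_contra hc
      push_neg at hc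
      have hm : midpoint ℝ ci₀ co₀ ∈ Metric.closedBall ci₀ r := by
        rw [Metric.mem_closedBall, dist_midpoint_left]
        simp only [Real.norm_two]; linarith
      have hm' : midpoint ℝ ci₀ co₀ ∈ Metric.ball co₀ r := by
        rw [Metric.mem_ball, dist_midpoint_right]
        simp only [Real.norm_two]; linarith
      exact hball hm' (h3 hm)
    rw [dist_comm x ci₀] at *
    linarith
  have hnorm : ‖n‖ = 1 := by
    rw [hn, norm_smul, norm_inv, Real.norm_of_nonneg hr.le, ← dist_eq_norm' x co₀, hdist]
    field_simp
  have hco₀ : co₀ = x + r • n := by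
    rw [hn, smul_smul, mul_inv_cancel₀ hr.ne', one_smul]
    abel
  have hrn : r • n = co₀ - x := by
    rw [hn, smul_smul, mul_inv_cancel₀ hr.ne', one_smul]
  have key : ∀ ci co : EuclideanSpace ℝ (Fin d),
      x ∈ Metric.closedBall ci r → x ∈ Metric.closedBall co r →
      Metric.closedBall ci r ⊆ X → interior (Metric.closedBall co r) ⊆ Xᶜ →
      ci = x - r • n ∧ co = x + r • n := by
    intro ci co hci hco hin hout
    -- cross pairs: (ci, co₀) and (ci₀, co)
    have hm1 := midsum ci co₀ (midpoint_of_balls d r hr X x ci co₀ hci h2 hin h4)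
    have hm2 := midsum ci₀ co (midpoint_of_balls d r hr X x ci₀ co h1 hco h3 hout)
    have hm0 := midsum ci₀ co₀ hxm
    constructor
    · have : ci = x + x - co₀ := eq_sub_of_add_eq hm1
      rw [this, hrn]; abel
    · have e1 : co = x + x - ci₀ := by
        have : ci₀ = x + x - co := eq_sub_of_add_eq hm2
        rw [this]; abel
      have e2 : co₀ = x + x - ci₀ := by
        have : ci₀ = x + x - co₀ := eq_sub_of_add_eq hm0
        rw [this]; abel
      rw [e1, ← e2, hco₀]
  refine ⟨n, ⟨hnorm, key⟩, ?_⟩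
  rintro m ⟨hm1, hm2⟩
  have h := (hm2 ci₀ co₀ h1 h2 h3 h4).2
  rw [hco₀] at h
  have heq : r • n = r • m := add_left_cancel h
  exact (smul_right_injective (EuclideanSpace ℝ (Fin d)) hr.ne' heq).symm
end

section
/- Let X ⊆ ℝ^d be an r-regular set, x ∈ ∂X with outward unit normal n = n(x), and α a tangent vector at x (α ⟂ n) with |α| < r. Then the line segment [x + α − r n, x + α + r n] contains exactly one point of ∂X. -/
set_option maxHeartbeats 2000000

open scoped RealInnerProductSpace

private lemma rReg_final_ineq (w δ A : ℝ) (hw0 : 0 < w) (hw1 : w ≤ 1) (hδ : 0 < δ)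
    (hδ2 : δ ≤ 2*(1-w)) (hA : 2*w + δ*(1-w) ≤ A) :
    (1-w^2)*δ*(δ + δ^2 - 2*A) < A^2 := by
  nlinarith [mul_nonneg (mul_nonneg (sq_nonneg δ) (by nlinarith : (0:ℝ) ≤ 1-w^2)) (by linarith : (0:ℝ) ≤ 2*(1-w) - δ),
    mul_pos hw0 hδ,
    mul_nonneg (mul_nonneg hδ.le (by nlinarith : (0:ℝ) ≤ 1-w^2)) (by linarith : (0:ℝ) ≤ A - (2*w + δ*(1-w))),
    mul_nonneg (by linarith : (0:ℝ) ≤ A - (2*w + δ*(1-w))) (by nlinarith : (0:ℝ) ≤ A + (2*w + δ*(1-w))),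
    mul_nonneg (mul_nonneg hw0.le hδ.le) (by linarith : (0:ℝ) ≤ 1-w)]

private lemma rReg_key_scalar (β w s1 s2 a b c t1 t2 : ℝ)
    (hw0 : 0 < w) (hw : w^2 = 1 - β^2)
    (hs1l : w ≤ s1 + 1) (hs1r : w ≤ 1 - s1)
    (hs2l : w ≤ s2 + 1) (hs2r : w ≤ 1 - s2)
    (hlt : s1 < s2)
    (hO1 : 4 ≤ β^2 + (s1+1)^2 + 1 + 2*t1 + 2*(s1+1)*a)
    (hI1 : 4 ≤ β^2 + (s1-1)^2 + 1 - 2*t1 - 2*(s1-1)*a)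
    (hI2 : 4 ≤ β^2 + (s2-1)^2 + 1 - 2*t2 - 2*(s2-1)*b)
    (hO2 : 4 ≤ β^2 + (s2+1)^2 + 1 + 2*t2 + 2*(s2+1)*b)
    (hC : 4 ≤ (s2-s1)^2 - 2*(s2-s1)*(a+b) + 2 + 2*c)
    (hB1 : 2*a ≤ s2 - s1) (hB2 : 2*b ≤ s2 - s1)
    (hCS : (t1-t2)^2 ≤ β^2*(2-2*c)) : False := by
  have hδ : 0 < s2 - s1 := by linarith
  have hb2 : β^2 = 1 - w^2 := by linarith
  have hw1 : w ≤ 1 := by nlinarith [sq_nonneg β]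
  have hδ2 : s2 - s1 ≤ 2*(1-w) := by linarith
  have ha' : 2 - β^2 - s1^2 ≤ 2*a := by linarith [hO1, hI1]
  have hb' : 2 - β^2 - s2^2 ≤ 2*b := by linarith [hO2, hI2]
  have hA0 : 2*w + (s2-s1)*(1-w) ≤ 1 + w^2 - s1*s2 := by
    linarith [mul_nonneg (by linarith : (0:ℝ) ≤ s1 + 1 - w) (by linarith : (0:ℝ) ≤ 1 - w - s2)]
  have hApos : 0 < 1 + w^2 - s1*s2 := by
    have h1 : 0 ≤ (s2-s1)*(1-w) := mul_nonneg hδ.le (by linarith)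
    linarith
  have hL : 2*(1 + w^2 - s1*s2) ≤ 2*(t1 - t2) := by
    have p1 : 0 ≤ (s1+1)*((s2-s1) - 2*a) := mul_nonneg (by linarith) (by linarith)
    have p2 : 0 ≤ (1-s2)*((s2-s1) - 2*b) := mul_nonneg (by linarith) (by linarith)
    linarith [hO1, hI2, p1, p2, hb2]
  have htpos : 0 < t1 - t2 := by linarith
  have hsq : (1 + w^2 - s1*s2)^2 ≤ (t1-t2)^2 :=
    sq_le_sq' (by linarith) (by linarith)
  have hc2 : 2 - 2*c ≤ (s2-s1)^2 - 2*(s2-s1)*(a+b) := by linarith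
  have hmul := mul_le_mul_of_nonneg_left hc2 (sq_nonneg β)
  have hchain : (1 + w^2 - s1*s2)^2 ≤ β^2 * ((s2-s1)^2 - 2*(s2-s1)*(a+b)) := by
    linarith [hsq, hCS, hmul]
  have key := mul_nonneg (mul_nonneg (sq_nonneg β) hδ.le)
    (by linarith : (0:ℝ) ≤ 2*a + 2*b - (2 - β^2 - s1^2) - (2 - β^2 - s2^2))
  have hab : β^2 * ((s2-s1)^2 - 2*(s2-s1)*(a+b)) ≤
      β^2 * ((s2-s1)^2 - (s2-s1)*((2 - β^2 - s1^2) + (2 - β^2 - s2^2))) := by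
    nlinarith [key]
  have hident : β^2 * ((s2-s1)^2 - (s2-s1)*((2 - β^2 - s1^2) + (2 - β^2 - s2^2))) =
      (1-w^2)*(s2-s1)*((s2-s1) + (s2-s1)^2 - 2*(1 + w^2 - s1*s2)) := by
    rw [hb2]; ring
  have hfin := rReg_final_ineq w (s2-s1) (1 + w^2 - s1*s2) hw0 hw1 hδ hδ2 hA0
  rw [← hident] at hfin
  linarith [hchain, hab, hfin]

private lemma rReg_key_scalar_r (r β w s1 s2 a b c t1 t2 : ℝ) (hr : 0 < r)
    (hw0 : 0 < w) (hw : w^2 = r^2 - β^2)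
    (hs1l : w ≤ s1 + r) (hs1r : w ≤ r - s1)
    (hs2l : w ≤ s2 + r) (hs2r : w ≤ r - s2)
    (hlt : s1 < s2)
    (hO1 : 4*r^2 ≤ β^2 + (s1+r)^2 + r^2 + 2*r*t1 + 2*r*(s1+r)*a)
    (hI1 : 4*r^2 ≤ β^2 + (s1-r)^2 + r^2 - 2*r*t1 - 2*r*(s1-r)*a)
    (hI2 : 4*r^2 ≤ β^2 + (s2-r)^2 + r^2 - 2*r*t2 - 2*r*(s2-r)*b)
    (hO2 : 4*r^2 ≤ β^2 + (s2+r)^2 + r^2 + 2*r*t2 + 2*r*(s2+r)*b)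
    (hC : 4*r^2 ≤ (s2-s1)^2 - 2*r*(s2-s1)*(a+b) + 2*r^2 + 2*r^2*c)
    (hB1 : r^2 ≤ (s2-s1)^2 - 2*r*(s2-s1)*a + r^2)
    (hB2 : r^2 ≤ (s2-s1)^2 - 2*r*(s2-s1)*b + r^2)
    (hCS : (t1-t2)^2 ≤ β^2*(2-2*c)) : False := by
  have hr2 : (0:ℝ) < r^2 := by positivity
  have hrne : r ≠ 0 := hr.ne'
  have hδ : 0 < s2 - s1 := by linarith
  apply rReg_key_scalar (β/r) (w/r) (s1/r) (s2/r) a b c (t1/r) (t2/r)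
  · positivity
  · field_simp; linarith [hw]
  · rw [div_add' _ _ _ hrne, div_le_div_iff₀ hr hr]; nlinarith [hs1l]
  · rw [show (1:ℝ) - s1/r = (r - s1)/r by field_simp, div_le_div_iff₀ hr hr]; nlinarith [hs1r]
  · rw [div_add' _ _ _ hrne, div_le_div_iff₀ hr hr]; nlinarith [hs2l]
  · rw [show (1:ℝ) - s2/r = (r - s2)/r by field_simp, div_le_div_iff₀ hr hr]; nlinarith [hs2r]
  · rw [div_lt_div_iff₀ hr hr]; nlinarith [hlt]
  · refine le_of_mul_le_mul_right ?_ hr2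
    have e : ((β/r)^2 + (s1/r+1)^2 + 1 + 2*(t1/r) + 2*(s1/r+1)*a) * r^2
        = β^2 + (s1+r)^2 + r^2 + 2*r*t1 + 2*r*(s1+r)*a := by field_simp; try ring
    rw [e]; linarith
  · refine le_of_mul_le_mul_right ?_ hr2
    have e : ((β/r)^2 + (s1/r-1)^2 + 1 - 2*(t1/r) - 2*(s1/r-1)*a) * r^2
        = β^2 + (s1-r)^2 + r^2 - 2*r*t1 - 2*r*(s1-r)*a := by field_simp; try ring
    rw [e]; linarith
  · refine le_of_mul_le_mul_right ?_ hr2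
    have e : ((β/r)^2 + (s2/r-1)^2 + 1 - 2*(t2/r) - 2*(s2/r-1)*b) * r^2
        = β^2 + (s2-r)^2 + r^2 - 2*r*t2 - 2*r*(s2-r)*b := by field_simp; try ring
    rw [e]; linarith
  · refine le_of_mul_le_mul_right ?_ hr2
    have e : ((β/r)^2 + (s2/r+1)^2 + 1 + 2*(t2/r) + 2*(s2/r+1)*b) * r^2
        = β^2 + (s2+r)^2 + r^2 + 2*r*t2 + 2*r*(s2+r)*b := by field_simp; try ring
    rw [e]; linarith
  · refine le_of_mul_le_mul_right ?_ hr2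
    have e : ((s2/r-s1/r)^2 - 2*(s2/r-s1/r)*(a+b) + 2 + 2*c) * r^2
        = (s2-s1)^2 - 2*r*(s2-s1)*(a+b) + 2*r^2 + 2*r^2*c := by field_simp; try ring
    rw [e]; linarith
  · rw [show s2/r - s1/r = (s2-s1)/r by field_simp, le_div_iff₀ hr]
    nlinarith [hB1, hδ, mul_pos hδ hr]
  · rw [show s2/r - s1/r = (s2-s1)/r by field_simp, le_div_iff₀ hr]
    nlinarith [hB2, hδ, mul_pos hδ hr]
  · refine le_of_mul_le_mul_right ?_ hr2
    have e1 : (t1/r - t2/r)^2 * r^2 = (t1-t2)^2 := by field_simp; try ring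
    have e2 : (β/r)^2*(2-2*c) * r^2 = β^2*(2-2*c) := by field_simp; try ring
    rw [e1, e2]; linarith

section RRegHelpers

variable {E : Type*} [NormedAddCommGroup E] [InnerProductSpace ℝ E]

private lemma rReg_norm_sq_expand (u v z : E) (p q s : ℝ) :
    ‖p•u + q•v + s•z‖^2 = p^2*‖u‖^2 + q^2*‖v‖^2 + s^2*‖z‖^2
      + 2*p*q*⟪u,v⟫ + 2*p*s*⟪u,z⟫ + 2*q*s*⟪v,z⟫ := by
  rw [← real_inner_self_eq_norm_sq, ← real_inner_self_eq_norm_sq,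
    ← real_inner_self_eq_norm_sq, ← real_inner_self_eq_norm_sq]
  simp only [inner_add_left, inner_add_right, real_inner_smul_left, real_inner_smul_right,
    real_inner_comm u v, real_inner_comm u z, real_inner_comm v z]
  ring

private lemma rReg_balls_far {X : Set E} {c1 c2 : E} {r : ℝ} (hr : 0 < r)
    (h1 : Metric.closedBall c1 r ⊆ X) (h2 : Metric.ball c2 r ⊆ Xᶜ) :
    2*r ≤ dist c1 c2 := by
  by_contra h
  push_neg at h
  have hd := dist_nonneg (x := c1) (y := c2)
  have hm1 : dist (midpoint ℝ c1 c2) c1 = ‖(2:ℝ)‖⁻¹ * dist c1 c2 := dist_midpoint_left c1 c2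
  have hm2 : dist (midpoint ℝ c1 c2) c2 = ‖(2:ℝ)‖⁻¹ * dist c1 c2 := dist_midpoint_right c1 c2
  have hn2 : ‖(2:ℝ)‖⁻¹ = 1/2 := by norm_num
  have hX1 : midpoint ℝ c1 c2 ∈ X :=
    h1 (by rw [Metric.mem_closedBall, hm1, hn2]; linarith)
  have hX2 : midpoint ℝ c1 c2 ∈ Xᶜ :=
    h2 (by rw [Metric.mem_ball, hm2, hn2]; linarith)
  exact hX2 hX1

private lemma rReg_mem_far {X : Set E} {y c : E} {r : ℝ} (hy : y ∈ X)
    (h : Metric.ball c r ⊆ Xᶜ) : r ≤ dist y c := by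
  by_contra h'
  push_neg at h'
  exact h (Metric.mem_ball.mpr h') hy

private lemma rReg_frontier_far {X : Set E} {y c : E} {r : ℝ} (hy : y ∈ frontier X)
    (h : Metric.ball c r ⊆ X) : r ≤ dist y c := by
  by_contra h'
  push_neg at h'
  exact hy.2 (interior_maximal h Metric.isOpen_ball (Metric.mem_ball.mpr h'))

private lemma rReg_exists_normal {y ci co : E} {r : ℝ} (hr : 0 < r) (h1 : dist y ci ≤ r)
    (h2 : dist y co ≤ r) (h3 : 2*r ≤ dist ci co) :
    ∃ m : E, ‖m‖ = 1 ∧ ci = y - r•m ∧ co = y + r•m := by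
  have htri : dist ci co ≤ dist ci y + dist y co := dist_triangle ci y co
  have ec : dist ci y = dist y ci := dist_comm ci y
  have hyci : dist y ci = r := by linarith
  have hyco : dist y co = r := by linarith
  have hcico : dist ci co = 2*r := le_antisymm (by linarith) h3
  have hu : ‖y - ci‖ = r := by rw [← dist_eq_norm]; exact hyci
  have hv : ‖co - y‖ = r := by rw [← dist_eq_norm, dist_comm]; exact hyco
  have huv : ‖(y - ci) + (co - y)‖ = 2*r := by
    have e : (y - ci) + (co - y) = co - ci := by abel
    rw [e, ← dist_eq_norm, dist_comm]; exact hcico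
  have hinner : ⟪y - ci, co - y⟫ = ‖y - ci‖ * ‖co - y‖ := by
    have hsq := norm_add_sq_real (y - ci) (co - y)
    rw [hu, hv, huv] at hsq
    rw [hu, hv]
    nlinarith [hsq]
  have heq : y - ci = co - y := by
    have h := inner_eq_norm_mul_iff_real.mp hinner
    rw [hu, hv] at h
    exact smul_right_injective E hr.ne' h
  refine ⟨r⁻¹ • (co - y), ?_, ?_, ?_⟩
  · rw [norm_smul, hv, norm_inv, Real.norm_of_nonneg hr.le]
    field_simp
  · rw [smul_smul, mul_inv_cancel₀ hr.ne', one_smul, ← heq]; abel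
  · rw [smul_smul, mul_inv_cancel₀ hr.ne', one_smul]; abel

private lemma rReg_no_two {X : Set E} {r : ℝ} (hr : 0 < r) (hX : IsClosed X)
    (hreg : ∀ y ∈ frontier X, ∃ ci co : E,
      y ∈ Metric.closedBall ci r ∧ y ∈ Metric.closedBall co r ∧
      Metric.closedBall ci r ⊆ X ∧ interior (Metric.closedBall co r) ⊆ Xᶜ)
    (x n α : E) (hn : ‖n‖ = 1)
    (hinner : Metric.closedBall (x - r•n) r ⊆ X)
    (houter : Metric.ball (x + r•n) r ⊆ Xᶜ)
    (hα : ⟪α,n⟫ = 0) (hαr : ‖α‖ < r)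
    {s1 s2 : ℝ} (hs1a : -r ≤ s1) (hs1b : s1 ≤ r) (hs2a : -r ≤ s2) (hs2b : s2 ≤ r)
    (hlt : s1 < s2)
    (h1f : x + α + s1•n ∈ frontier X) (h2f : x + α + s2•n ∈ frontier X) : False := by
  have hβ0 : (0:ℝ) ≤ ‖α‖ := norm_nonneg α
  have hinner_ball : Metric.ball (x - r•n) r ⊆ X := Metric.ball_subset_closedBall.trans hinner
  have hy1X : x + α + s1•n ∈ X := by
    have := frontier_subset_closure (s := X) h1f; rwa [hX.closure_eq] at this
  have hy2X : x + α + s2•n ∈ X := by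
    have := frontier_subset_closure (s := X) h2f; rwa [hX.closure_eq] at this
  obtain ⟨ci1, co1, hci1y, hco1y, hci1X, hco1X⟩ := hreg _ h1f
  obtain ⟨ci2, co2, hci2y, hco2y, hci2X, hco2X⟩ := hreg _ h2f
  rw [interior_closedBall _ hr.ne'] at hco1X hco2X
  obtain ⟨m1, hm1, eci1, eco1⟩ := rReg_exists_normal hr (Metric.mem_closedBall.mp hci1y)
    (Metric.mem_closedBall.mp hco1y) (rReg_balls_far hr hci1X hco1X)
  obtain ⟨m2, hm2, eci2, eco2⟩ := rReg_exists_normal hr (Metric.mem_closedBall.mp hci2y)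
    (Metric.mem_closedBall.mp hco2y) (rReg_balls_far hr hci2X hco2X)
  set w : ℝ := Real.sqrt (r^2 - ‖α‖^2) with hwdef
  have hrb : (0:ℝ) < r^2 - ‖α‖^2 := by nlinarith
  have hw2 : w^2 = r^2 - ‖α‖^2 := Real.sq_sqrt hrb.le
  have hw0 : 0 < w := Real.sqrt_pos.mpr hrb
  have hs1l : w ≤ s1 + r := by
    have h := rReg_frontier_far h1f hinner_ball
    rw [dist_eq_norm] at h
    have ev : (x + α + s1•n) - (x - r•n) = (1:ℝ)•α + (s1+r)•n + (0:ℝ)•n := by module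
    rw [ev] at h
    have h2 := pow_le_pow_left₀ (by positivity) h 2
    rw [rReg_norm_sq_expand, hα, hn] at h2
    have h3 : r^2 - ‖α‖^2 ≤ (s1+r)^2 := by nlinarith [h2]
    have h4 := Real.sqrt_le_sqrt h3
    rwa [Real.sqrt_sq (by linarith)] at h4
  have hs1r : w ≤ r - s1 := by
    have h := rReg_mem_far hy1X houter
    rw [dist_eq_norm] at h
    have ev : (x + α + s1•n) - (x + r•n) = (1:ℝ)•α + (s1-r)•n + (0:ℝ)•n := by module
    rw [ev] at h
    have h2 := pow_le_pow_left₀ (by positivity) h 2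
    rw [rReg_norm_sq_expand, hα, hn] at h2
    have h3 : r^2 - ‖α‖^2 ≤ (r-s1)^2 := by nlinarith [h2]
    have h4 := Real.sqrt_le_sqrt h3
    rwa [Real.sqrt_sq (by linarith)] at h4
  have hs2l : w ≤ s2 + r := by
    have h := rReg_frontier_far h2f hinner_ball
    rw [dist_eq_norm] at h
    have ev : (x + α + s2•n) - (x - r•n) = (1:ℝ)•α + (s2+r)•n + (0:ℝ)•n := by module
    rw [ev] at h
    have h2 := pow_le_pow_left₀ (by positivity) h 2
    rw [rReg_norm_sq_expand, hα, hn] at h2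
    have h3 : r^2 - ‖α‖^2 ≤ (s2+r)^2 := by nlinarith [h2]
    have h4 := Real.sqrt_le_sqrt h3
    rwa [Real.sqrt_sq (by linarith)] at h4
  have hs2r : w ≤ r - s2 := by
    have h := rReg_mem_far hy2X houter
    rw [dist_eq_norm] at h
    have ev : (x + α + s2•n) - (x + r•n) = (1:ℝ)•α + (s2-r)•n + (0:ℝ)•n := by module
    rw [ev] at h
    have h2 := pow_le_pow_left₀ (by positivity) h 2
    rw [rReg_norm_sq_expand, hα, hn] at h2
    have h3 : r^2 - ‖α‖^2 ≤ (r-s2)^2 := by nlinarith [h2]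
    have h4 := Real.sqrt_le_sqrt h3
    rwa [Real.sqrt_sq (by linarith)] at h4
  have hO1 : 4*r^2 ≤ ‖α‖^2 + (s1+r)^2 + r^2 + 2*r*⟪α,m1⟫ + 2*r*(s1+r)*⟪n,m1⟫ := by
    have h := rReg_balls_far hr hinner hco1X
    rw [dist_eq_norm, eco1] at h
    have ev : (x - r•n) - ((x + α + s1•n) + r•m1) = (-1:ℝ)•α + (-(s1+r))•n + (-r)•m1 := by
      module
    rw [ev] at h
    have h2 := pow_le_pow_left₀ (by positivity) h 2
    rw [rReg_norm_sq_expand, hα, hn, hm1] at h2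
    nlinarith [h2]
  have hI1 : 4*r^2 ≤ ‖α‖^2 + (s1-r)^2 + r^2 - 2*r*⟪α,m1⟫ - 2*r*(s1-r)*⟪n,m1⟫ := by
    have h := rReg_balls_far hr hci1X houter
    rw [dist_eq_norm, eci1] at h
    have ev : ((x + α + s1•n) - r•m1) - (x + r•n) = (1:ℝ)•α + (s1-r)•n + (-r)•m1 := by
      module
    rw [ev] at h
    have h2 := pow_le_pow_left₀ (by positivity) h 2
    rw [rReg_norm_sq_expand, hα, hn, hm1] at h2
    nlinarith [h2]
  have hI2 : 4*r^2 ≤ ‖α‖^2 + (s2-r)^2 + r^2 - 2*r*⟪α,m2⟫ - 2*r*(s2-r)*⟪n,m2⟫ := by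
    have h := rReg_balls_far hr hci2X houter
    rw [dist_eq_norm, eci2] at h
    have ev : ((x + α + s2•n) - r•m2) - (x + r•n) = (1:ℝ)•α + (s2-r)•n + (-r)•m2 := by
      module
    rw [ev] at h
    have h2 := pow_le_pow_left₀ (by positivity) h 2
    rw [rReg_norm_sq_expand, hα, hn, hm2] at h2
    nlinarith [h2]
  have hO2 : 4*r^2 ≤ ‖α‖^2 + (s2+r)^2 + r^2 + 2*r*⟪α,m2⟫ + 2*r*(s2+r)*⟪n,m2⟫ := by
    have h := rReg_balls_far hr hinner hco2X
    rw [dist_eq_norm, eco2] at h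
    have ev : (x - r•n) - ((x + α + s2•n) + r•m2) = (-1:ℝ)•α + (-(s2+r))•n + (-r)•m2 := by
      module
    rw [ev] at h
    have h2 := pow_le_pow_left₀ (by positivity) h 2
    rw [rReg_norm_sq_expand, hα, hn, hm2] at h2
    nlinarith [h2]
  have hC : 4*r^2 ≤ (s2-s1)^2 - 2*r*(s2-s1)*(⟪n,m1⟫+⟪n,m2⟫) + 2*r^2 + 2*r^2*⟪m1,m2⟫ := by
    have h := rReg_balls_far hr hci2X hco1X
    rw [dist_eq_norm, eci2, eco1] at h
    have ev : ((x + α + s2•n) - r•m2) - ((x + α + s1•n) + r•m1)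
        = (s2-s1)•n + (-r)•m1 + (-r)•m2 := by module
    rw [ev] at h
    have h2 := pow_le_pow_left₀ (by positivity) h 2
    rw [rReg_norm_sq_expand, hn, hm1, hm2] at h2
    nlinarith [h2]
  have hB1 : r^2 ≤ (s2-s1)^2 - 2*r*(s2-s1)*⟪n,m1⟫ + r^2 := by
    have h := rReg_mem_far hy2X hco1X
    rw [dist_eq_norm, eco1] at h
    have ev : (x + α + s2•n) - ((x + α + s1•n) + r•m1)
        = (s2-s1)•n + (-r)•m1 + (0:ℝ)•m1 := by module
    rw [ev] at h
    have h2 := pow_le_pow_left₀ (by positivity) h 2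
    rw [rReg_norm_sq_expand, hn, hm1] at h2
    nlinarith [h2]
  have hB2 : r^2 ≤ (s2-s1)^2 - 2*r*(s2-s1)*⟪n,m2⟫ + r^2 := by
    have h := rReg_frontier_far h1f (Metric.ball_subset_closedBall.trans hci2X)
    rw [dist_eq_norm, eci2] at h
    have ev : (x + α + s1•n) - ((x + α + s2•n) - r•m2)
        = (s1-s2)•n + r•m2 + (0:ℝ)•m2 := by module
    rw [ev] at h
    have h2 := pow_le_pow_left₀ (by positivity) h 2
    rw [rReg_norm_sq_expand, hn, hm2] at h2
    nlinarith [h2]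
  have hCS : (⟪α,m1⟫-⟪α,m2⟫)^2 ≤ ‖α‖^2*(2-2*⟪m1,m2⟫) := by
    have cs := real_inner_mul_inner_self_le α (m1 - m2)
    rw [inner_sub_right] at cs
    have e2 : ⟪m1-m2, m1-m2⟫ = 2 - 2*⟪m1,m2⟫ := by
      rw [inner_sub_left, inner_sub_right, inner_sub_right, real_inner_self_eq_norm_sq,
        real_inner_self_eq_norm_sq, hm1, hm2, real_inner_comm m2 m1]
      ring
    rw [e2, real_inner_self_eq_norm_sq] at cs
    nlinarith [cs]
  exact rReg_key_scalar_r r ‖α‖ w s1 s2 ⟪n,m1⟫ ⟪n,m2⟫ ⟪m1,m2⟫ ⟪α,m1⟫ ⟪α,m2⟫ hr hw0 hw2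
    hs1l hs1r hs2l hs2r hlt hO1 hI1 hI2 hO2 hC hB1 hB2 hCS

end RRegHelpers

/-- For an `r`-regular set `X ⊆ ℝ³` (in general `ℝ^d`), a boundary point `x` with outward
unit normal `n` and a tangent vector `α` with `|α| < r`, the segment
`[x + α - r n, x + α + r n]` contains exactly one boundary point of `X`. -/
theorem rRegular_normal_segment_unique_boundary_point (d : ℕ) (r : ℝ) (hr : 0 < r)
    (X : Set (EuclideanSpace ℝ (Fin d))) (hX : IsClosed X)
    (hreg : ∀ y ∈ frontier X, ∃ ci co : EuclideanSpace ℝ (Fin d),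
      y ∈ Metric.closedBall ci r ∧ y ∈ Metric.closedBall co r ∧
      Metric.closedBall ci r ⊆ X ∧ interior (Metric.closedBall co r) ⊆ Xᶜ)
    (x : EuclideanSpace ℝ (Fin d)) (hx : x ∈ frontier X)
    (n : EuclideanSpace ℝ (Fin d)) (hn : ‖n‖ = 1)
    (hinner : Metric.closedBall (x - r • n) r ⊆ X)
    (houter : interior (Metric.closedBall (x + r • n) r) ⊆ Xᶜ)
    (α : EuclideanSpace ℝ (Fin d)) (hα : ⟪α, n⟫ = 0) (hαr : ‖α‖ < r) :
    ∃! y : EuclideanSpace ℝ (Fin d),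
      y ∈ frontier X ∧ y ∈ segment ℝ (x + α - r • n) (x + α + r • n) := by
  have houter' : Metric.ball (x + r • n) r ⊆ Xᶜ := by
    rw [← interior_closedBall _ hr.ne']; exact houter
  -- segment membership for parametrized points
  have hseg : ∀ s : ℝ, -r ≤ s → s ≤ r →
      x + α + s•n ∈ segment ℝ (x + α - r • n) (x + α + r • n) := by
    intro s h1 h2
    refine ⟨(r - s)/(2*r), (s + r)/(2*r), div_nonneg (by linarith) (by linarith),
      div_nonneg (by linarith) (by linarith), ?_, ?_⟩
    · field_simp; ring
    · have e : ((r - s)/(2*r))•(x + α - r • n) + ((s + r)/(2*r))•(x + α + r • n)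
          = (((r - s)/(2*r)) + ((s + r)/(2*r)))•(x + α) + ((((s+r) - (r-s))/(2*r))*r)•n := by
        module
      rw [e]
      have e1 : ((r - s)/(2*r)) + ((s + r)/(2*r)) = 1 := by field_simp; ring
      have e2 : (((s+r) - (r-s))/(2*r))*r = s := by field_simp; ring
      rw [e1, e2, one_smul]
  -- segment points are parametrized
  have hparam : ∀ y ∈ segment ℝ (x + α - r • n) (x + α + r • n),
      ∃ s : ℝ, -r ≤ s ∧ s ≤ r ∧ y = x + α + s•n := by
    rintro y ⟨p, q, hp, hq, hpq, rfl⟩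
    refine ⟨(q - p)*r, by nlinarith, by nlinarith, ?_⟩
    have e : p•(x + α - r • n) + q•(x + α + r • n)
        = (p + q)•(x + α) + ((q - p)*r)•n := by module
    rw [e, hpq, one_smul]
  -- existence via sSup
  have hcont : Continuous fun s : ℝ => x + α + s•n :=
    continuous_const.add (continuous_id.smul continuous_const)
  set T := {s : ℝ | s ∈ Set.Icc (-r) r ∧ x + α + s•n ∈ X} with hTdef
  have hmem_neg : -r ∈ T := by
    refine ⟨⟨le_refl _, by linarith⟩, ?_⟩
    apply hinner
    rw [Metric.mem_closedBall, dist_eq_norm]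
    have ev : (x + α + (-r)•n) - (x - r • n) = α := by module
    rw [ev]; exact hαr.le
  have hne : T.Nonempty := ⟨-r, hmem_neg⟩
  have hbdd : BddAbove T := ⟨r, fun s hs => hs.1.2⟩
  have hTclosed : IsClosed T := by
    have : T = Set.Icc (-r) r ∩ (fun s : ℝ => x + α + s•n) ⁻¹' X := rfl
    rw [this]
    exact isClosed_Icc.inter (hX.preimage hcont)
  have hs0T : sSup T ∈ T := hTclosed.csSup_mem hne hbdd
  have hs0a : -r ≤ sSup T := hs0T.1.1
  have hs0b : sSup T ≤ r := hs0T.1.2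
  have hfr : x + α + r•n ∈ Xᶜ := by
    apply houter'
    rw [Metric.mem_ball, dist_eq_norm]
    have ev : (x + α + r•n) - (x + r • n) = α := by module
    rw [ev]; exact hαr
  have hs0lt : sSup T < r := by
    rcases lt_or_eq_of_le hs0b with h | h
    · exact h
    · exact absurd (h ▸ hs0T.2) hfr
  have hy0f : x + α + (sSup T)•n ∈ frontier X := by
    rw [frontier_eq_closure_inter_closure]
    refine ⟨subset_closure hs0T.2, ?_⟩
    rw [Metric.mem_closure_iff]
    intro ε hε
    have hs's : sSup T < min r (sSup T + ε/2) := lt_min hs0lt (by linarith)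
    have hnotin : x + α + (min r (sSup T + ε/2))•n ∈ Xᶜ := by
      by_contra hmem
      rw [Set.mem_compl_iff, not_not] at hmem
      have hT' : min r (sSup T + ε/2) ∈ T :=
        ⟨⟨le_min (by linarith) (by linarith), min_le_left _ _⟩, hmem⟩
      exact absurd (le_csSup hbdd hT') (not_le.mpr hs's)
    refine ⟨x + α + (min r (sSup T + ε/2))•n, hnotin, ?_⟩
    rw [dist_eq_norm]
    have ev : (x + α + (sSup T)•n) - (x + α + (min r (sSup T + ε/2))•n)
        = (sSup T - min r (sSup T + ε/2))•n := by module
    rw [ev, norm_smul, hn, mul_one, Real.norm_eq_abs, abs_of_neg (by linarith)]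
    have := min_le_right r (sSup T + ε/2)
    linarith
  refine ⟨x + α + (sSup T)•n, ⟨hy0f, hseg _ hs0a hs0b⟩, ?_⟩
  rintro y ⟨hyf, hyseg⟩
  obtain ⟨s, hsa, hsb, rfl⟩ := hparam y hyseg
  rcases lt_trichotomy s (sSup T) with h | h | h
  · exact absurd (rReg_no_two hr hX hreg x n α hn hinner houter' hα hαr hsa hsb hs0a hs0b h
      hyf hy0f) id
  · rw [h]
  · exact absurd (rReg_no_two hr hX hreg x n α hn hinner houter' hα hαr hs0a hs0b hsa hsb h
      hy0f hyf) id
end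

section
/- Let X ⊆ ℝ^d be r-regular, x ∈ ∂X, n = n(x) the outward normal, and for a tangent vector α with |α| < r let q(x,α) be the signed distance such that x + α + q(x,α)n ∈ ∂X. Then |q(x,α)| ≤ r − √(r² − |α|²). In particular, for |α| ≤ ρ and 0 < |a| ≤ r/ρ, the ratio |q(x,aα)|/a² is bounded by a constant depending only on ρ and r. -/
open scoped RealInnerProductSpace

private lemma norm_add_smul_sq (d : ℕ) (α n : EuclideanSpace ℝ (Fin d)) (c : ℝ)
    (hn : ‖n‖ = 1) (ho : ⟪α, n⟫ = 0) : ‖α + c • n‖ ^ 2 = ‖α‖ ^ 2 + c ^ 2 := by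
  rw [norm_add_sq_real, real_inner_smul_right, ho, norm_smul, Real.norm_eq_abs, mul_pow,
    sq_abs, hn]
  ring

private lemma sqrt_bound (r s : ℝ) (hr : 0 < r) (hs : 0 ≤ s) (hsr : s ≤ r) :
    r - Real.sqrt (r ^ 2 - s ^ 2) ≤ s ^ 2 / r := by
  set t := Real.sqrt (r ^ 2 - s ^ 2) with ht
  have h0 : 0 ≤ r ^ 2 - s ^ 2 := by nlinarith
  have ht2 : t ^ 2 = r ^ 2 - s ^ 2 := Real.sq_sqrt h0
  have htn : 0 ≤ t := Real.sqrt_nonneg _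
  have htr : t ≤ r := by
    rw [ht]
    calc Real.sqrt (r ^ 2 - s ^ 2) ≤ Real.sqrt (r ^ 2) := by
          apply Real.sqrt_le_sqrt; nlinarith
      _ = r := by rw [Real.sqrt_sq hr.le]
  rw [le_div_iff₀ hr]
  nlinarith

/-- For an `r`-regular set `X`, a boundary point `x` with outward unit normal `n`, and a
tangent vector `α` with `|α| < r`, the signed distance `q = q(x,α)` with
`x + α + q n ∈ ∂X` satisfies `|q| ≤ r - √(r² - |α|²)`; in particular, for `|α| ≤ ρ` and
`0 < |a| ≤ r/ρ`, the ratio `|q(x,aα)|/a²` is bounded by a constant depending only on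
`ρ` and `r`. -/
theorem rRegular_q_bound (d : ℕ) (r : ℝ) (hr : 0 < r)
    (X : Set (EuclideanSpace ℝ (Fin d))) (hX : IsClosed X)
    (hreg : ∀ y ∈ frontier X, ∃ ci co : EuclideanSpace ℝ (Fin d),
      y ∈ Metric.closedBall ci r ∧ y ∈ Metric.closedBall co r ∧
      Metric.closedBall ci r ⊆ X ∧ interior (Metric.closedBall co r) ⊆ Xᶜ)
    (x : EuclideanSpace ℝ (Fin d)) (hx : x ∈ frontier X)
    (n : EuclideanSpace ℝ (Fin d)) (hn : ‖n‖ = 1)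
    (hinner : Metric.closedBall (x - r • n) r ⊆ X)
    (houter : interior (Metric.closedBall (x + r • n) r) ⊆ Xᶜ) :
    (∀ (α : EuclideanSpace ℝ (Fin d)) (q : ℝ), ⟪α, n⟫ = 0 → ‖α‖ < r → |q| ≤ r →
        x + α + q • n ∈ frontier X → |q| ≤ r - Real.sqrt (r ^ 2 - ‖α‖ ^ 2)) ∧
      ∀ ρ : ℝ, 0 < ρ → ∃ C : ℝ,
        ∀ (a : ℝ) (α : EuclideanSpace ℝ (Fin d)) (q : ℝ),
          a ≠ 0 → |a| ≤ r / ρ → ‖α‖ ≤ ρ → ⟪α, n⟫ = 0 → ‖a • α‖ < r → |q| ≤ r →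
          x + a • α + q • n ∈ frontier X → |q| / a ^ 2 ≤ C := by
  have main : ∀ (α : EuclideanSpace ℝ (Fin d)) (q : ℝ), ⟪α, n⟫ = 0 → ‖α‖ < r → |q| ≤ r →
      x + α + q • n ∈ frontier X → |q| ≤ r - Real.sqrt (r ^ 2 - ‖α‖ ^ 2) := by
    intro α q ho hα hq hy
    set y := x + α + q • n with hydef
    have hyX : y ∈ X := hX.frontier_subset hy
    have hynI : y ∉ interior X := hy.2
    have hqr : -r ≤ q ∧ q ≤ r := abs_le.mp hq
    have hsq : 0 ≤ r ^ 2 - ‖α‖ ^ 2 := by nlinarith [norm_nonneg α]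
    -- outer ball
    have hdo : r ≤ dist y (x + r • n) := by
      by_contra h
      push_neg at h
      have : y ∈ interior (Metric.closedBall (x + r • n) r) := by
        rw [interior_closedBall _ hr.ne']
        exact Metric.mem_ball.mpr h
      exact houter this hyX
    -- inner ball
    have hdi : r ≤ dist y (x - r • n) := by
      by_contra h
      push_neg at h
      have hmem : y ∈ Metric.ball (x - r • n) r := Metric.mem_ball.mpr h
      have : Metric.ball (x - r • n) r ⊆ interior X :=
        (Metric.isOpen_ball.subset_interior_iff).mpr
          (Metric.ball_subset_closedBall.trans hinner)
      exact hynI (this hmem)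
    have hsub1 : y - (x + r • n) = α + (q - r) • n := by
      rw [hydef, sub_smul]; abel
    have hsub2 : y - (x - r • n) = α + (q + r) • n := by
      rw [hydef, add_smul]; abel
    have hno : ‖α + (q - r) • n‖ ^ 2 = ‖α‖ ^ 2 + (q - r) ^ 2 :=
      norm_add_smul_sq d α n _ hn ho
    have hni : ‖α + (q + r) • n‖ ^ 2 = ‖α‖ ^ 2 + (q + r) ^ 2 :=
      norm_add_smul_sq d α n _ hn ho
    have ho2 : r ^ 2 ≤ ‖α‖ ^ 2 + (q - r) ^ 2 := by
      rw [← hno]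
      have := hdo
      rw [dist_eq_norm, hsub1] at this
      nlinarith [norm_nonneg (α + (q - r) • n)]
    have hi2 : r ^ 2 ≤ ‖α‖ ^ 2 + (q + r) ^ 2 := by
      rw [← hni]
      have := hdi
      rw [dist_eq_norm, hsub2] at this
      nlinarith [norm_nonneg (α + (q + r) • n)]
    have h1 : Real.sqrt (r ^ 2 - ‖α‖ ^ 2) ≤ r - q := by
      calc Real.sqrt (r ^ 2 - ‖α‖ ^ 2) ≤ Real.sqrt ((r - q) ^ 2) := by
            apply Real.sqrt_le_sqrt; nlinarith
        _ = |r - q| := Real.sqrt_sq_eq_abs _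
        _ = r - q := abs_of_nonneg (by linarith [hqr.2])
    have h2 : Real.sqrt (r ^ 2 - ‖α‖ ^ 2) ≤ r + q := by
      calc Real.sqrt (r ^ 2 - ‖α‖ ^ 2) ≤ Real.sqrt ((r + q) ^ 2) := by
            apply Real.sqrt_le_sqrt; nlinarith
        _ = |r + q| := Real.sqrt_sq_eq_abs _
        _ = r + q := abs_of_nonneg (by linarith [hqr.1])
    exact abs_le.mpr ⟨by linarith, by linarith⟩
  refine ⟨main, fun ρ hρ => ⟨ρ ^ 2 / r, ?_⟩⟩
  intro a α q ha _ hαρ ho haα hq hy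
  have ho' : ⟪a • α, n⟫ = 0 := by rw [real_inner_smul_left, ho, mul_zero]
  have hb := main (a • α) q ho' haα hq hy
  have hs : ‖a • α‖ ^ 2 = a ^ 2 * ‖α‖ ^ 2 := by
    rw [norm_smul]; rw [Real.norm_eq_abs]; rw [mul_pow, sq_abs]
  have hbound : |q| ≤ ‖a • α‖ ^ 2 / r :=
    hb.trans (sqrt_bound r ‖a • α‖ hr (norm_nonneg _) haα.le)
  have ha2 : 0 < a ^ 2 := by positivity
  rw [div_le_iff₀ ha2]
  calc |q| ≤ ‖a • α‖ ^ 2 / r := hbound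
    _ = a ^ 2 * ‖α‖ ^ 2 / r := by rw [hs]
    _ ≤ ρ ^ 2 / r * a ^ 2 := by
        have h1 : ‖α‖ ^ 2 ≤ ρ ^ 2 := by nlinarith [norm_nonneg α]
        rw [div_mul_eq_mul_div, mul_comm (ρ ^ 2) (a ^ 2)]
        gcongr
end

section
/- Let X ⊆ ℝ^d be r-regular with boundary ∂X of class C^1, let x ∈ ∂X be a point where the outward normal field n is differentiable, and let α be a unit tangent vector at x. Then lim_{a→0} q(x, aα)/a² = −(1/2)·II_x(α), where q(x,aα) is the signed height of ∂X over the tangent plane at x + aα in direction n(x), and II_x(α) = ⟨d_x n(α), α⟩ is the second fundamental form. -/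
open scoped RealInnerProductSpace Topology

lemma aux_ball {E : Type*} [NormedAddCommGroup E] [InnerProductSpace ℝ E] {r : ℝ} (hr : 0 < r)
    {u n : E} (hn : ‖n‖ = 1) (h1 : r ≤ ‖u + r • n‖) (h2 : r ≤ ‖u - r • n‖) :
    |⟪u, n⟫| ≤ ‖u‖ ^ 2 / (2 * r) := by
  have hrn : ‖r • n‖ = r := by rw [norm_smul, hn, Real.norm_eq_abs, abs_of_pos hr, mul_one]
  have e1 : ‖u + r • n‖ ^ 2 = ‖u‖ ^ 2 + 2 * (r * ⟪u, n⟫) + r ^ 2 := by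
    rw [norm_add_sq_real, real_inner_smul_right, hrn]
  have e2 : ‖u - r • n‖ ^ 2 = ‖u‖ ^ 2 - 2 * (r * ⟪u, n⟫) + r ^ 2 := by
    rw [norm_sub_sq_real, real_inner_smul_right, hrn]
  have s1 : r ^ 2 ≤ ‖u + r • n‖ ^ 2 := by
    apply pow_le_pow_left₀ hr.le h1
  have s2 : r ^ 2 ≤ ‖u - r • n‖ ^ 2 := by
    apply pow_le_pow_left₀ hr.le h2
  rw [e1] at s1; rw [e2] at s2
  rw [abs_le]
  constructor
  · rw [neg_le, le_div_iff₀ (by positivity : (0:ℝ) < 2*r)]; nlinarith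
  · rw [le_div_iff₀ (by positivity : (0:ℝ) < 2*r)]; nlinarith

lemma aux_frontier_ball {d : ℕ} {r : ℝ} (hr : 0 < r)
    {X : Set (EuclideanSpace ℝ (Fin d))} (hX : IsClosed X)
    {ν : EuclideanSpace ℝ (Fin d) → EuclideanSpace ℝ (Fin d)}
    (hν : ∀ y ∈ frontier X, ‖ν y‖ = 1 ∧
      Metric.closedBall (y - r • ν y) r ⊆ X ∧
      interior (Metric.closedBall (y + r • ν y) r) ⊆ Xᶜ)
    {y z : EuclideanSpace ℝ (Fin d)} (hy : y ∈ frontier X) (hz : z ∈ frontier X) :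
    |⟪z - y, ν y⟫| ≤ ‖z - y‖ ^ 2 / (2 * r) := by
  obtain ⟨hn, hin, hout⟩ := hν y hy
  rw [frontier_eq_closure_inter_closure] at hz
  have hzX : z ∈ X := hX.closure_eq ▸ hz.1
  have hzi : z ∉ interior X := by
    have := hz.2; rw [closure_compl] at this; exact this
  have h2 : r ≤ ‖z - y - r • ν y‖ := by
    have hz' : z ∉ Metric.ball (y + r • ν y) r := by
      intro h
      have hmem : z ∈ interior (Metric.closedBall (y + r • ν y) r) := by
        rw [interior_closedBall _ hr.ne']; exact h
      exact (hout hmem) hzX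
    have := Metric.mem_ball.not.mp hz'
    rw [dist_eq_norm] at this
    have h3 : z - (y + r • ν y) = z - y - r • ν y := by abel
    rw [h3] at this; linarith [not_lt.mp this]
  have h1 : r ≤ ‖z - y + r • ν y‖ := by
    have hz' : z ∉ Metric.ball (y - r • ν y) r := by
      intro h
      exact hzi (interior_maximal (Metric.ball_subset_closedBall.trans hin) Metric.isOpen_ball h)
    have := Metric.mem_ball.not.mp hz'
    rw [dist_eq_norm] at this
    have h3 : z - (y - r • ν y) = z - y + r • ν y := by abel
    rw [h3] at this; linarith [not_lt.mp this]
  exact aux_ball hr hn h1 h2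

lemma aux_q_bound {d : ℕ} {r : ℝ} (hr : 0 < r)
    {X : Set (EuclideanSpace ℝ (Fin d))} (hX : IsClosed X)
    {ν : EuclideanSpace ℝ (Fin d) → EuclideanSpace ℝ (Fin d)}
    (hν : ∀ y ∈ frontier X, ‖ν y‖ = 1 ∧
      Metric.closedBall (y - r • ν y) r ⊆ X ∧
      interior (Metric.closedBall (y + r • ν y) r) ⊆ Xᶜ)
    {x : EuclideanSpace ℝ (Fin d)} (hx : x ∈ frontier X)
    {α : EuclideanSpace ℝ (Fin d)} (hα : ⟪α, ν x⟫ = 0) (hα1 : ‖α‖ = 1)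
    {a Q : ℝ} (hQr : |Q| ≤ r) (hQf : x + a • α + Q • ν x ∈ frontier X) :
    |Q| ≤ a ^ 2 / r := by
  have hn1 : ‖ν x‖ = 1 := (hν x hx).1
  have key := aux_frontier_ball hr hX hν hx hQf
  have hsub : x + a • α + Q • ν x - x = a • α + Q • ν x := by abel
  rw [hsub] at key
  have hi : ⟪a • α + Q • ν x, ν x⟫ = Q := by
    rw [inner_add_left, real_inner_smul_left, real_inner_smul_left, hα,
      real_inner_self_eq_norm_sq, hn1]
    ring
  have hnsq : ‖a • α + Q • ν x‖ ^ 2 = a ^ 2 + Q ^ 2 := by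
    rw [norm_add_sq_real, real_inner_smul_left, real_inner_smul_right,
      norm_smul, norm_smul, hα, hα1, hn1, Real.norm_eq_abs, Real.norm_eq_abs]
    rw [mul_pow, mul_pow, sq_abs, sq_abs]
    ring
  rw [hi, hnsq] at key
  have h2 : |Q| * (2 * r) ≤ a ^ 2 + Q ^ 2 := (le_div_iff₀ (by positivity)).mp key
  rw [le_div_iff₀ hr]
  nlinarith [sq_abs Q, abs_nonneg Q]

lemma aux_pyth {E : Type*} [NormedAddCommGroup E] [InnerProductSpace ℝ E]
    {α n : E} (hα : ⟪α, n⟫ = 0) (hα1 : ‖α‖ = 1) (hn1 : ‖n‖ = 1) (a b : ℝ) :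
    ‖a • α + b • n‖ ^ 2 = a ^ 2 + b ^ 2 := by
  rw [norm_add_sq_real, real_inner_smul_left, real_inner_smul_right,
    norm_smul, norm_smul, hα, hα1, hn1, Real.norm_eq_abs, Real.norm_eq_abs,
    mul_pow, mul_pow, sq_abs, sq_abs]
  ring

set_option maxHeartbeats 2000000 in
/-- For an `r`-regular set `X` with outward normal field `ν` differentiable at `x ∈ ∂X`,
and a unit tangent vector `α`, the signed height `q(x, aα)` of the boundary over the
tangent plane satisfies `lim_{a→0} q(x,aα)/a² = -½ II_x(α)`, where
`II_x(α) = ⟪d_x ν (α), α⟫` is the second fundamental form. -/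
theorem rRegular_q_second_order (d : ℕ) (r : ℝ) (hr : 0 < r)
    (X : Set (EuclideanSpace ℝ (Fin d))) (hX : IsClosed X)
    (ν : EuclideanSpace ℝ (Fin d) → EuclideanSpace ℝ (Fin d))
    (hν : ∀ y ∈ frontier X, ‖ν y‖ = 1 ∧
      Metric.closedBall (y - r • ν y) r ⊆ X ∧
      interior (Metric.closedBall (y + r • ν y) r) ⊆ Xᶜ)
    (x : EuclideanSpace ℝ (Fin d)) (hx : x ∈ frontier X)
    (dn : EuclideanSpace ℝ (Fin d) →L[ℝ] EuclideanSpace ℝ (Fin d))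
    (hdn : HasFDerivWithinAt ν dn (frontier X) x)
    (α : EuclideanSpace ℝ (Fin d)) (hα : ⟪α, ν x⟫ = 0) (hα1 : ‖α‖ = 1)
    (q : ℝ → ℝ)
    (hq : ∀ a : ℝ, |a| < r → |q a| ≤ r ∧ x + a • α + (q a) • ν x ∈ frontier X) :
    Filter.Tendsto (fun a : ℝ => q a / a ^ 2) (𝓝[≠] 0)
      (𝓝 (-(1 / 2) * ⟪dn α, α⟫)) := by
  have hn1 : ‖ν x‖ = 1 := (hν x hx).1
  set II : ℝ := ⟪dn α, α⟫ with hIIdef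
  set C : ℝ := ‖dn‖ with hCdef
  have hC0 : (0 : ℝ) ≤ C := norm_nonneg _
  rw [Metric.tendsto_nhdsWithin_nhds]
  intro ε hε
  obtain ⟨N, hN⟩ := exists_nat_gt ((2 * |II| + 2 / r) / ε)
  have hNR : (0 : ℝ) < N := lt_trans (by positivity) hN
  have hNne : (N : ℝ) ≠ 0 := ne_of_gt hNR
  set ε' : ℝ := ε / (24 * N) with hε'def
  have hε' : 0 < ε' := by positivity
  have hlo := hdn.isLittleO.def hε'
  rw [Filter.eventually_iff, Metric.mem_nhdsWithin_iff] at hlo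
  obtain ⟨δ', hδ'0, hδ'⟩ := hlo
  set M : ℝ := 2 * N / r ^ 2 + 5 * C * N / r with hMdef
  have hM0 : (0 : ℝ) ≤ M := by positivity
  refine ⟨min (min r (δ' / 2)) (ε / (4 * (M + 1))), by positivity, ?_⟩
  intro a ha0' had
  have ha0 : a ≠ 0 := ha0'
  rw [Real.dist_eq, sub_zero] at had
  have har : |a| < r := lt_of_lt_of_le had ((min_le_left _ _).trans (min_le_left _ _))
  have haδ' : |a| < δ' / 2 := lt_of_lt_of_le had ((min_le_left _ _).trans (min_le_right _ _))
  have haM : |a| < ε / (4 * (M + 1)) := lt_of_lt_of_le had (min_le_right _ _)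
  have ha2 : (0 : ℝ) < a ^ 2 := by positivity
  have ha2r : a ^ 2 / r ≤ |a| := by
    rw [div_le_iff₀ hr]; nlinarith [sq_abs a, abs_nonneg a]
  -- per-step estimate
  have step : ∀ k : ℕ, k < N →
      |q (((k : ℝ) + 1) * a / N) - q ((k : ℝ) * a / N)
        + (a / N) * ((k : ℝ) * a / N) * II| ≤
      (a ^ 2 / N ^ 2 + 4 * (a ^ 2 / r) ^ 2) / (2 * r) + 2 * (a ^ 2 / r) * (|a| * C)
        + (a ^ 2 / r) * (3 * |a| * C) + 3 * |a| * (ε' * (2 * |a|)) := by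
    intro k hkN
    have hkR : (k : ℝ) + 1 ≤ N := by exact_mod_cast Nat.succ_le_of_lt hkN
    have hk0 : (0 : ℝ) ≤ k := Nat.cast_nonneg k
    set s : ℝ := (k : ℝ) * a / N with hsdef
    set t : ℝ := ((k : ℝ) + 1) * a / N with htdef
    have hkN' : (k : ℝ) ≤ N := by linarith
    have hsabs : |s| ≤ |a| := by
      rw [hsdef, abs_div, abs_mul, Nat.abs_cast, abs_of_pos hNR, div_le_iff₀ hNR]
      calc (k : ℝ) * |a| ≤ (N : ℝ) * |a| := mul_le_mul_of_nonneg_right hkN' (abs_nonneg a)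
        _ = |a| * N := by ring
    have htabs : |t| ≤ |a| := by
      rw [htdef, abs_div, abs_mul, abs_of_nonneg (by linarith : (0:ℝ) ≤ (k:ℝ)+1),
        abs_of_pos hNR, div_le_iff₀ hNR]
      calc ((k : ℝ) + 1) * |a| ≤ (N : ℝ) * |a| := mul_le_mul_of_nonneg_right hkR (abs_nonneg a)
        _ = |a| * N := by ring
    obtain ⟨hqsr, hys⟩ := hq s (lt_of_le_of_lt hsabs har)
    obtain ⟨hqtr, hyt⟩ := hq t (lt_of_le_of_lt htabs har)
    have hs2 : s ^ 2 ≤ a ^ 2 := by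
      rw [← sq_abs s, ← sq_abs a]; exact pow_le_pow_left₀ (abs_nonneg s) hsabs 2
    have ht2 : t ^ 2 ≤ a ^ 2 := by
      rw [← sq_abs t, ← sq_abs a]; exact pow_le_pow_left₀ (abs_nonneg t) htabs 2
    have hqs : |q s| ≤ a ^ 2 / r := by
      refine le_trans (aux_q_bound hr hX hν hx hα hα1 hqsr hys) ?_
      gcongr
    have hqt : |q t| ≤ a ^ 2 / r := by
      refine le_trans (aux_q_bound hr hX hν hx hα hα1 hqtr hyt) ?_
      gcongr
    set ys : EuclideanSpace ℝ (Fin d) := x + s • α + (q s) • ν x with hysdef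
    set yt : EuclideanSpace ℝ (Fin d) := x + t • α + (q t) • ν x with hytdef
    set D : ℝ := q t - q s with hDdef
    have hts : t - s = a / N := by
      rw [htdef, hsdef, div_sub_div_same]
      ring_nf
    have hzy : yt - ys = (a / N) • α + D • ν x := by
      rw [hysdef, hytdef, hDdef, ← hts]; module
    have key := aux_frontier_ball hr hX hν hys hyt
    rw [hzy] at key
    have hvs : ys - x = s • α + (q s) • ν x := by rw [hysdef]; abel
    have hnvs : ‖ys - x‖ ≤ 2 * |a| := by
      rw [hvs]
      refine le_trans (norm_add_le _ _) ?_
      rw [norm_smul, norm_smul, hα1, hn1, Real.norm_eq_abs, Real.norm_eq_abs, mul_one, mul_one]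
      linarith [hqs.trans ha2r, hsabs]
    set e : EuclideanSpace ℝ (Fin d) := ν ys - ν x - dn (ys - x) with hedef
    have hes : ‖e‖ ≤ ε' * (2 * |a|) := by
      have hmem : ys ∈ Metric.ball x δ' ∩ frontier X := by
        refine ⟨Metric.mem_ball.mpr ?_, hys⟩
        rw [dist_eq_norm]
        calc ‖ys - x‖ ≤ 2 * |a| := hnvs
          _ < δ' := by linarith
      have := hδ' hmem
      calc ‖e‖ ≤ ε' * ‖ys - x‖ := this
        _ ≤ ε' * (2 * |a|) := mul_le_mul_of_nonneg_left hnvs hε'.le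
    have hνys : ν ys = ν x + dn (ys - x) + e := by rw [hedef]; abel
    set w : EuclideanSpace ℝ (Fin d) := (a / N) • α + D • ν x with hwdef
    -- expand the inner product
    have hinner1 : ⟪w, ν x⟫ = D := by
      rw [hwdef, inner_add_left, real_inner_smul_left, real_inner_smul_left, hα,
        real_inner_self_eq_norm_sq, hn1]
      ring
    have hdnvs : dn (ys - x) = s • (dn α) + (q s) • (dn (ν x)) := by
      rw [hvs, map_add, map_smul, map_smul]
    have hinner2 : ⟪w, dn (ys - x)⟫ =
        (a / N) * s * II + D * (s * ⟪ν x, dn α⟫) + (q s) * ⟪w, dn (ν x)⟫ := by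
      rw [hdnvs, inner_add_right, real_inner_smul_right, real_inner_smul_right, hwdef,
        inner_add_left, inner_add_left, real_inner_smul_left, real_inner_smul_left,
        hIIdef, real_inner_comm α (dn α)]
      ring
    have hexp : ⟪w, ν ys⟫ = D + ((a / N) * s * II + D * (s * ⟪ν x, dn α⟫)
        + (q s) * ⟪w, dn (ν x)⟫) + ⟪w, e⟫ := by
      rw [hνys, inner_add_right, inner_add_right, hinner1, hinner2]
    -- bounds
    have hDb : |D| ≤ 2 * (a ^ 2 / r) := by
      rw [hDdef]
      calc |q t - q s| ≤ |q t| + |q s| := abs_sub _ _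
        _ ≤ 2 * (a ^ 2 / r) := by linarith
    have hwnorm : ‖w‖ ≤ 3 * |a| := by
      rw [hwdef]
      refine le_trans (norm_add_le _ _) ?_
      rw [norm_smul, norm_smul, hα1, hn1, Real.norm_eq_abs, Real.norm_eq_abs, mul_one, mul_one]
      have h1 : |a / N| ≤ |a| := by
        rw [abs_div, abs_of_pos hNR, div_le_iff₀ hNR]
        calc |a| = |a| * 1 := (mul_one _).symm
          _ ≤ |a| * N := by
            apply mul_le_mul_of_nonneg_left ?_ (abs_nonneg a)
            exact_mod_cast hNR
      linarith [hDb.trans (by linarith : 2 * (a ^ 2 / r) ≤ 2 * |a|)]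
    have hCb1 : |⟪ν x, dn α⟫| ≤ C := by
      refine le_trans (abs_real_inner_le_norm _ _) ?_
      rw [hn1, one_mul, hCdef]
      calc ‖dn α‖ ≤ ‖dn‖ * ‖α‖ := dn.le_opNorm α
        _ = ‖dn‖ := by rw [hα1, mul_one]
    have hCb2 : |⟪w, dn (ν x)⟫| ≤ 3 * |a| * C := by
      refine le_trans (abs_real_inner_le_norm _ _) ?_
      have : ‖dn (ν x)‖ ≤ C := by
        calc ‖dn (ν x)‖ ≤ ‖dn‖ * ‖ν x‖ := dn.le_opNorm _
          _ = C := by rw [hn1, mul_one, hCdef]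
      calc ‖w‖ * ‖dn (ν x)‖ ≤ (3 * |a|) * C := by
            apply mul_le_mul hwnorm this (norm_nonneg _) (by positivity)
        _ = 3 * |a| * C := by ring
    have hCb3 : |⟪w, e⟫| ≤ 3 * |a| * (ε' * (2 * |a|)) := by
      refine le_trans (abs_real_inner_le_norm _ _) ?_
      apply mul_le_mul hwnorm hes (norm_nonneg _) (by positivity)
    have hwsq : ‖w‖ ^ 2 = (a / N) ^ 2 + D ^ 2 := aux_pyth hα hα1 hn1 _ _
    have hkey2 : |⟪w, ν ys⟫| ≤ (a ^ 2 / N ^ 2 + 4 * (a ^ 2 / r) ^ 2) / (2 * r) := by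
      refine le_trans key ?_
      rw [hwsq, div_pow]
      gcongr
      calc D ^ 2 = |D| ^ 2 := (sq_abs D).symm
        _ ≤ (2 * (a ^ 2 / r)) ^ 2 := pow_le_pow_left₀ (abs_nonneg D) hDb 2
        _ = 4 * (a ^ 2 / r) ^ 2 := by ring
    -- combine
    have hqq : q t - q s + (a / N) * ((k : ℝ) * a / N) * II
        = ⟪w, ν ys⟫ - (D * (s * ⟪ν x, dn α⟫) + (q s) * ⟪w, dn (ν x)⟫ + ⟪w, e⟫) := by
      rw [hexp, hDdef, hsdef]; ring
    rw [hqq]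
    have t1 : |D * (s * ⟪ν x, dn α⟫)| ≤ 2 * (a ^ 2 / r) * (|a| * C) := by
      rw [abs_mul, abs_mul]
      apply mul_le_mul hDb (mul_le_mul hsabs hCb1 (abs_nonneg _) (abs_nonneg a))
        (by positivity) (by positivity)
    have t2 : |(q s) * ⟪w, dn (ν x)⟫| ≤ (a ^ 2 / r) * (3 * |a| * C) := by
      rw [abs_mul]
      apply mul_le_mul hqs hCb2 (abs_nonneg _) (by positivity)
    calc |⟪w, ν ys⟫ - (D * (s * ⟪ν x, dn α⟫) + (q s) * ⟪w, dn (ν x)⟫ + ⟪w, e⟫)|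
        ≤ |⟪w, ν ys⟫| + |D * (s * ⟪ν x, dn α⟫) + (q s) * ⟪w, dn (ν x)⟫ + ⟪w, e⟫| :=
          abs_sub _ _
      _ ≤ |⟪w, ν ys⟫| + (|D * (s * ⟪ν x, dn α⟫)| + |(q s) * ⟪w, dn (ν x)⟫| + |⟪w, e⟫|) := by
          linarith [abs_add_le (D * (s * ⟪ν x, dn α⟫) + (q s) * ⟪w, dn (ν x)⟫) ⟪w, e⟫,
            abs_add_le (D * (s * ⟪ν x, dn α⟫)) ((q s) * ⟪w, dn (ν x)⟫)]
      _ ≤ _ := by linarith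
  set B : ℝ := (a ^ 2 / N ^ 2 + 4 * (a ^ 2 / r) ^ 2) / (2 * r) + 2 * (a ^ 2 / r) * (|a| * C)
        + (a ^ 2 / r) * (3 * |a| * C) + 3 * |a| * (ε' * (2 * |a|)) with hBdef
  have hB0 : 0 ≤ B := by rw [hBdef]; positivity
  have ind : ∀ k : ℕ, k ≤ N →
      |q ((k : ℝ) * a / N) + II * (a / N) ^ 2 * ((k : ℝ) * ((k : ℝ) - 1)) / 2| ≤ (k : ℝ) * B := by
    intro k
    induction k with
    | zero =>
      intro _
      obtain ⟨hq0r, hq0f⟩ := hq 0 (by simpa using hr)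
      have h0 : |q 0| ≤ 0 ^ 2 / r := aux_q_bound hr hX hν hx hα hα1 hq0r hq0f
      have hq00 : q 0 = 0 := by
        rw [← abs_nonpos_iff]
        calc |q 0| ≤ 0 ^ 2 / r := h0
          _ = 0 := by simp
      simp [hq00]
    | succ k ih =>
      intro hk1
      have hkN : k < N := Nat.lt_of_succ_le hk1
      have h1 := ih (Nat.le_of_succ_le hk1)
      have h2 := step k hkN
      have hcast : ((k + 1 : ℕ) : ℝ) = (k : ℝ) + 1 := by push_cast; ring
      rw [hcast]
      have hkey : q (((k : ℝ) + 1) * a / N)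
          + II * (a / N) ^ 2 * (((k : ℝ) + 1) * (((k : ℝ) + 1) - 1)) / 2
          = (q (((k : ℝ) + 1) * a / N) - q ((k : ℝ) * a / N)
              + (a / N) * ((k : ℝ) * a / N) * II)
            + (q ((k : ℝ) * a / N) + II * (a / N) ^ 2 * ((k : ℝ) * ((k : ℝ) - 1)) / 2) := by
        ring
      rw [hkey]
      refine le_trans (abs_add_le _ _) ?_
      have hBk : ((k : ℝ) + 1) * B = B + (k : ℝ) * B := by ring
      rw [hBk]
      exact add_le_add h2 h1
  have hfin := ind N le_rfl
  have hNa : (N : ℝ) * a / N = a := by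
    field_simp
  rw [hNa] at hfin
  rw [Real.dist_eq]
  have habs : q a / a ^ 2 - -(1 / 2) * II
      = (q a + II * (a / N) ^ 2 * ((N : ℝ) * ((N : ℝ) - 1)) / 2) / a ^ 2
        + (II / 2 - II * ((N : ℝ) - 1) / (2 * N)) := by
    field_simp
    ring
  rw [habs]
  have T1 : |(q a + II * (a / N) ^ 2 * ((N : ℝ) * ((N : ℝ) - 1)) / 2) / a ^ 2|
      ≤ (N : ℝ) * B / a ^ 2 := by
    rw [abs_div, abs_of_pos ha2]
    gcongr
  have T2 : |II / 2 - II * ((N : ℝ) - 1) / (2 * N)| = |II| / (2 * N) := by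
    have e : II / 2 - II * ((N : ℝ) - 1) / (2 * N) = II / (2 * N) := by
      field_simp; ring
    rw [e, abs_div, abs_of_pos (by positivity : (0 : ℝ) < 2 * N)]
  have hεterm : 3 * |a| * (ε' * (2 * |a|)) = 6 * ε' * a ^ 2 := by
    rw [← sq_abs a]; ring
  have e1 : (N : ℝ) * B / a ^ 2
      = 1 / (2 * r * N) + 2 * N * a ^ 2 / r ^ 3 + 5 * C * N * |a| / r + 6 * (N : ℝ) * ε' := by
    rw [hBdef, hεterm]
    field_simp
    ring
  have e2 : 6 * (N : ℝ) * ε' = ε / 4 := by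
    rw [hε'def]; field_simp; ring
  have e3 : 2 * (N : ℝ) * a ^ 2 / r ^ 3 ≤ 2 * N * |a| / r ^ 2 := by
    have ha2r' : a ^ 2 ≤ r * |a| := by
      rw [div_le_iff₀ hr] at ha2r; linarith
    rw [div_le_div_iff₀ (by positivity) (by positivity)]
    calc 2 * (N : ℝ) * a ^ 2 * r ^ 2 ≤ 2 * N * (r * |a|) * r ^ 2 := by
          apply mul_le_mul_of_nonneg_right ?_ (by positivity)
          exact mul_le_mul_of_nonneg_left ha2r' (by positivity)
      _ = 2 * N * |a| * r ^ 3 := by ring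
  have hMabs : 2 * (N : ℝ) * |a| / r ^ 2 + 5 * C * N * |a| / r = M * |a| := by
    rw [hMdef]; ring
  have hM4 : M * |a| ≤ ε / 4 := by
    calc M * |a| ≤ M * (ε / (4 * (M + 1))) := mul_le_mul_of_nonneg_left haM.le hM0
      _ ≤ ε / 4 := by
        rw [le_div_iff₀ (by norm_num : (0:ℝ) < 4)]
        have : M * (ε / (4 * (M + 1))) * 4 = ε * (M / (M + 1)) := by
          field_simp
        rw [this]
        calc ε * (M / (M + 1)) ≤ ε * 1 := by
              apply mul_le_mul_of_nonneg_left ?_ hε.le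
              rw [div_le_one (by positivity)]; linarith
          _ = ε := mul_one ε
  have hN' : 2 * |II| + 2 / r < ε * N := by
    rw [div_lt_iff₀ hε] at hN; linarith
  have hN4 : 1 / (2 * r * N) + |II| / (2 * N) < ε / 4 := by
    have e : 1 / (2 * r * (N : ℝ)) + |II| / (2 * N) = (2 / r + 2 * |II|) / (4 * N) := by
      field_simp; ring
    rw [e, div_lt_iff₀ (by positivity : (0 : ℝ) < 4 * N)]
    nlinarith [hN']
  calc |(q a + II * (a / N) ^ 2 * ((N : ℝ) * ((N : ℝ) - 1)) / 2) / a ^ 2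
        + (II / 2 - II * ((N : ℝ) - 1) / (2 * N))|
      ≤ |(q a + II * (a / N) ^ 2 * ((N : ℝ) * ((N : ℝ) - 1)) / 2) / a ^ 2|
        + |II / 2 - II * ((N : ℝ) - 1) / (2 * N)| := abs_add_le _ _
    _ ≤ (N : ℝ) * B / a ^ 2 + |II| / (2 * N) := by rw [T2] at *; linarith
    _ < ε := by
        rw [e1, e2]
        linarith
end

section
/- Let X ⊆ ℝ^d be r-regular. Then every principal curvature of ∂X (an eigenvalue of the differential of the outward normal field, wherever it exists) has absolute value at most 1/r. -/
open scoped RealInnerProductSpace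

/-!
If `p, q ∈ ∂X`, then `q` lies outside both open balls of radius `r` touching `∂X` at `p`, so
`2 r |⟪q - p, ν p⟫| ≤ ‖q - p‖²`; adding this to the same bound with `p` and `q` exchanged gives
`r |⟪q - p, ν q - ν p⟫| ≤ ‖q - p‖²`. Each `v ⟂ ν x` is a tangent direction of `∂X` at `x`, because
the normal line through `x + t v` crosses `∂X` within `O(t²)` of `x + t v`. Passing to the limit
along such points gives `|⟪v, dν v⟫| ≤ ‖v‖² / r`, which for an eigenvector is `|k| ≤ 1 / r`.
-/

open Filter Metric Set Topology

theorem IsPreconnected.inter_frontier_nonempty {α : Type*} [TopologicalSpace α] {s t : Set α}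
    (hs : IsPreconnected s) (hst : (s ∩ t).Nonempty) (hst' : (s \ t).Nonempty) :
    (s ∩ frontier t).Nonempty := by
  by_contra hempty
  have hcover : s ⊆ interior t ∪ (closure t)ᶜ := fun z hz => by
    by_cases hzc : z ∈ closure t
    · exact .inl (by_contra fun hzi => hempty ⟨z, hz, hzc, hzi⟩)
    · exact .inr hzc
  obtain ⟨a, has, hat⟩ := hst
  obtain ⟨b, hbs, hbt⟩ := hst'
  obtain ⟨z, -, hzi, hzc⟩ := hs _ _ isOpen_interior isClosed_closure.isOpen_compl hcover
    ⟨a, has, (hcover has).resolve_right (not_not.mpr (subset_closure hat))⟩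
    ⟨b, hbs, (hcover hbs).resolve_left fun hbi => hbt (interior_subset hbi)⟩
  exact hzc (interior_subset_closure hzi)

section InnerProductSpace

variable {E : Type*} [NormedAddCommGroup E] [InnerProductSpace ℝ E]

theorem two_mul_abs_inner_le_of_le_dist {p q n : E} {r : ℝ} (hr : 0 ≤ r) (hn : ‖n‖ = 1)
    (hout : r ≤ dist q (p + r • n)) (hin : r ≤ dist q (p - r • n)) :
    2 * r * |⟪q - p, n⟫| ≤ ‖q - p‖ ^ 2 := by
  have hrn : ‖r • n‖ ^ 2 = r ^ 2 := by rw [norm_smul, hn, mul_one, Real.norm_eq_abs, sq_abs]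
  have eout : r ^ 2 ≤ ‖(q - p) - r • n‖ ^ 2 := by
    rw [dist_eq_norm, ← sub_sub] at hout; exact pow_le_pow_left₀ hr hout 2
  have ein : r ^ 2 ≤ ‖(q - p) + r • n‖ ^ 2 := by
    rw [dist_eq_norm, sub_sub_eq_add_sub, add_sub_right_comm] at hin
    exact pow_le_pow_left₀ hr hin 2
  rw [norm_sub_sq_real, real_inner_smul_right, hrn] at eout
  rw [norm_add_sq_real, real_inner_smul_right, hrn] at ein
  calc 2 * r * |⟪q - p, n⟫| = |2 * r * ⟪q - p, n⟫| := by
        rw [abs_mul, abs_of_nonneg (by positivity : (0 : ℝ) ≤ 2 * r)]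
    _ ≤ ‖q - p‖ ^ 2 := abs_le.mpr ⟨by linarith, by linarith⟩

theorem HasFDerivWithinAt.abs_inner_apply_le_of_mem_tangentConeAt {f : E → E} {f' : E →L[ℝ] E}
    {s : Set E} {x v : E} {C : ℝ} (hf : HasFDerivWithinAt f f' s x)
    (hs : ∀ y ∈ s, |⟪y - x, f y - f x⟫| ≤ C * ‖y - x‖ ^ 2) (hv : v ∈ tangentConeAt ℝ s x) :
    |⟪v, f' v⟫| ≤ C * ‖v‖ ^ 2 := by
  obtain ⟨α, l, hl, c, d, hd, hds, hcd⟩ := exists_fun_of_mem_tangentConeAt hv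
  refine le_of_tendsto_of_tendsto (hcd.inner (hf.lim hd hds hcd)).abs
    (tendsto_const_nhds.mul (hcd.norm.pow 2)) ?_
  filter_upwards [hds] with n hn
  have := hs _ hn
  rw [add_sub_cancel_left] at this
  calc |⟪c n • d n, c n • (f (x + d n) - f x)⟫| = c n ^ 2 * |⟪d n, f (x + d n) - f x⟫| := by
        rw [real_inner_smul_left, real_inner_smul_right, ← mul_assoc, abs_mul, ← sq,
          abs_of_nonneg (sq_nonneg _)]
    _ ≤ c n ^ 2 * (C * ‖d n‖ ^ 2) := by gcongr
    _ = C * ‖c n • d n‖ ^ 2 := by rw [norm_smul, mul_pow, Real.norm_eq_abs, sq_abs]; ring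

def IsRRegular (r : ℝ) (X : Set E) (ν : E → E) : Prop :=
  ∀ y ∈ frontier X, ‖ν y‖ = 1 ∧ closedBall (y - r • ν y) r ⊆ X ∧
    interior (closedBall (y + r • ν y) r) ⊆ Xᶜ

namespace IsRRegular

variable {r : ℝ} {X : Set E} {ν : E → E} {p q x : E}

theorem norm_eq_one (h : IsRRegular r X ν) (hp : p ∈ frontier X) : ‖ν p‖ = 1 := (h p hp).1

theorem frontier_subset (h : IsRRegular r X ν) (hr : 0 ≤ r) : frontier X ⊆ X := fun p hp =>
  (h p hp).2.1 <| by
    rw [mem_closedBall, dist_eq_norm, sub_sub_cancel, norm_smul, h.norm_eq_one hp, mul_one,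
      Real.norm_eq_abs, abs_of_nonneg hr]

theorem le_dist_sub (h : IsRRegular r X ν) (hp : p ∈ frontier X) (hq : q ∈ frontier X) :
    r ≤ dist q (p - r • ν p) := by
  by_contra! hlt
  have hball : ball (p - r • ν p) r ⊆ interior X :=
    interior_maximal (ball_subset_closedBall.trans (h p hp).2.1) isOpen_ball
  exact hq.2 (hball hlt)

theorem le_dist_add (h : IsRRegular r X ν) (hr : 0 ≤ r) (hp : p ∈ frontier X)
    (hq : q ∈ frontier X) : r ≤ dist q (p + r • ν p) := by
  by_contra! hlt
  exact (h p hp).2.2 (ball_subset_interior_closedBall hlt) (h.frontier_subset hr hq)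

theorem two_mul_abs_inner_le (h : IsRRegular r X ν) (hr : 0 ≤ r) (hp : p ∈ frontier X)
    (hq : q ∈ frontier X) : 2 * r * |⟪q - p, ν p⟫| ≤ ‖q - p‖ ^ 2 :=
  two_mul_abs_inner_le_of_le_dist hr (h.norm_eq_one hp) (h.le_dist_add hr hp hq)
    (h.le_dist_sub hp hq)

theorem abs_inner_sub_le (h : IsRRegular r X ν) (hr : 0 < r) (hp : p ∈ frontier X)
    (hq : q ∈ frontier X) : |⟪q - p, ν q - ν p⟫| ≤ r⁻¹ * ‖q - p‖ ^ 2 := by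
  have hpq := h.two_mul_abs_inner_le hr.le hp hq
  have hqp := h.two_mul_abs_inner_le hr.le hq hp
  rw [← neg_sub, norm_neg, inner_neg_left, abs_neg] at hqp
  rw [← div_eq_inv_mul, le_div_iff₀ hr, inner_sub_right]
  nlinarith [abs_sub (⟪q - p, ν q⟫) (⟪q - p, ν p⟫)]

theorem exists_add_smul_mem_frontier (h : IsRRegular r X ν) (hx : x ∈ frontier X) {w : E}
    (hw : ⟪w, ν x⟫ = 0) (hwr : ‖w‖ < r) :
    ∃ s : ℝ, r * |s| ≤ ‖w‖ ^ 2 ∧ x + w + s • ν x ∈ frontier X := by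
  have hν := h.norm_eq_one hx
  set g : ℝ → E := fun s => x + w + s • ν x
  have hdist : ∀ a b : ℝ, dist (g a) (x + b • ν x) = ‖w + (a - b) • ν x‖ := fun a b => by
    rw [dist_eq_norm, sub_smul]; congr 1; simp only [g]; abel
  have hlow : g (-r) ∈ X := (h x hx).2.1 <| by
    rw [mem_closedBall, sub_eq_add_neg, ← neg_smul, hdist, sub_self, zero_smul, add_zero]
    exact hwr.le
  have hhigh : g r ∉ X := fun hgX => (h x hx).2.2 (ball_subset_interior_closedBall <| by
    rwa [mem_ball, hdist, sub_self, zero_smul, add_zero]) hgX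
  have hconn : IsPreconnected (g '' Icc (-r) r) :=
    isPreconnected_Icc.image g (by fun_prop)
  have hr : 0 ≤ r := (norm_nonneg w).trans hwr.le
  obtain ⟨_, ⟨s, hs, rfl⟩, hsX⟩ := hconn.inter_frontier_nonempty
    ⟨g (-r), mem_image_of_mem g ⟨le_rfl, by linarith⟩, hlow⟩
    ⟨g r, mem_image_of_mem g ⟨by linarith, le_rfl⟩, hhigh⟩
  refine ⟨s, ?_, hsX⟩
  have horth : ⟪w, s • ν x⟫ = 0 := by rw [real_inner_smul_right, hw, mul_zero]
  have hbound := h.two_mul_abs_inner_le hr hx hsX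
  rw [show g s - x = w + s • ν x by simp only [g]; abel, inner_add_left, hw, zero_add,
    real_inner_smul_left, real_inner_self_eq_norm_sq, hν, norm_add_sq_real, horth,
    norm_smul, hν] at hbound
  -- `2 r |s| ≤ ‖w‖² + s²` together with `|s| ≤ r`
  have hsr : |s| ≤ r := abs_le.mpr hs
  simp only [one_pow, mul_one, mul_zero, add_zero, Real.norm_eq_abs, sq_abs] at hbound
  nlinarith [abs_nonneg s, sq_abs s]

theorem mem_tangentConeAt_frontier_of_inner_eq_zero (h : IsRRegular r X ν) (hr : 0 < r)
    (hx : x ∈ frontier X) {v : E} (hv : ⟪v, ν x⟫ = 0) : v ∈ tangentConeAt ℝ (frontier X) x := by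
  have hsmall : ∀ᶠ t in 𝓝[>] (0 : ℝ), ‖t • v‖ < r := by
    have : Tendsto (fun t : ℝ => ‖t • v‖) (𝓝 0) (𝓝 0) := by
      simpa using ((continuous_id.smul (continuous_const (y := v))).norm.tendsto (0 : ℝ))
    exact nhdsWithin_le_nhds (this.eventually (gt_mem_nhds hr))
  choose! s hs using fun t (ht : ‖t • v‖ < r) =>
    h.exists_add_smul_mem_frontier hx (by rw [real_inner_smul_left, hv, mul_zero]) ht
  have hquot : Tendsto (fun t => s t / t) (𝓝[>] 0) (𝓝 0) := by
    have hlin : Tendsto (fun t : ℝ => t * (‖v‖ ^ 2 / r)) (𝓝[>] 0) (𝓝 0) := by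
      simpa using ((continuous_mul_const (‖v‖ ^ 2 / r)).tendsto 0).mono_left nhdsWithin_le_nhds
    refine squeeze_zero_norm' ?_ hlin
    filter_upwards [hsmall, self_mem_nhdsWithin] with t ht (htpos : 0 < t)
    have hst := (hs t ht).1
    rw [norm_smul, mul_pow, Real.norm_eq_abs, sq_abs] at hst
    rw [Real.norm_eq_abs, abs_div, abs_of_pos htpos, div_le_iff₀ htpos,
      show t * (‖v‖ ^ 2 / r) * t = t ^ 2 * ‖v‖ ^ 2 / r by ring, le_div_iff₀ hr]
    linarith
  have hcd : Tendsto (fun t : ℝ => t⁻¹ • (t • v + s t • ν x)) (𝓝[>] 0) (𝓝 v) := by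
    refine Tendsto.congr' ?_ (by simpa using tendsto_const_nhds.add (hquot.smul_const (ν x)))
    filter_upwards [self_mem_nhdsWithin] with t (htpos : 0 < t)
    rw [smul_add, inv_smul_smul₀ htpos.ne', smul_smul, inv_mul_eq_div]
  exact mem_tangentConeAt_of_seq _ (fun t => t⁻¹) _
    (tangentConeAt.lim_zero _ (tendsto_norm_atTop_atTop.comp tendsto_inv_nhdsGT_zero) hcd)
    (hsmall.mono fun t ht => by simpa only [add_assoc] using (hs t ht).2) hcd

end IsRRegular

end InnerProductSpace

theorem rRegular_principal_curvature_bound_general (d : ℕ) (r : ℝ) (hr : 0 < r)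
    (X : Set (EuclideanSpace ℝ (Fin d)))
    (ν : EuclideanSpace ℝ (Fin d) → EuclideanSpace ℝ (Fin d))
    (hν : ∀ y ∈ frontier X, ‖ν y‖ = 1 ∧
      Metric.closedBall (y - r • ν y) r ⊆ X ∧
      interior (Metric.closedBall (y + r • ν y) r) ⊆ Xᶜ)
    (x : EuclideanSpace ℝ (Fin d)) (hx : x ∈ frontier X)
    (dn : EuclideanSpace ℝ (Fin d) →L[ℝ] EuclideanSpace ℝ (Fin d))
    (hdn : HasFDerivWithinAt ν dn (frontier X) x)
    (v : EuclideanSpace ℝ (Fin d)) (hv : v ≠ 0) (hvt : ⟪v, ν x⟫ = 0)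
    (k : ℝ) (hk : dn v = k • v) :
    |k| ≤ 1 / r := by
  have hreg : IsRRegular r X ν := hν
  have hbound := hdn.abs_inner_apply_le_of_mem_tangentConeAt
    (fun y hy => hreg.abs_inner_sub_le hr hx hy)
    (hreg.mem_tangentConeAt_frontier_of_inner_eq_zero hr hx hvt)
  rw [hk, real_inner_smul_right, real_inner_self_eq_norm_sq, abs_mul,
    abs_of_nonneg (sq_nonneg ‖v‖)] at hbound
  rw [one_div]
  exact le_of_mul_le_mul_right hbound (pow_pos (norm_pos_iff.mpr hv) 2)

/-- For an `r`-regular set `X` with outward normal field `ν`, every principal curvature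
of `∂X` (an eigenvalue of the differential of `ν` restricted to the tangent space, where
it exists) has absolute value at most `1/r`. -/
theorem rRegular_principal_curvature_bound (d : ℕ) (r : ℝ) (hr : 0 < r)
    (X : Set (EuclideanSpace ℝ (Fin d))) (hX : IsClosed X)
    (ν : EuclideanSpace ℝ (Fin d) → EuclideanSpace ℝ (Fin d))
    (hν : ∀ y ∈ frontier X, ‖ν y‖ = 1 ∧
      Metric.closedBall (y - r • ν y) r ⊆ X ∧
      interior (Metric.closedBall (y + r • ν y) r) ⊆ Xᶜ)
    (x : EuclideanSpace ℝ (Fin d)) (hx : x ∈ frontier X)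
    (dn : EuclideanSpace ℝ (Fin d) →L[ℝ] EuclideanSpace ℝ (Fin d))
    (hdn : HasFDerivWithinAt ν dn (frontier X) x)
    (v : EuclideanSpace ℝ (Fin d)) (hv : v ≠ 0) (hvt : ⟪v, ν x⟫ = 0)
    (k : ℝ) (hk : dn v = k • v) :
    |k| ≤ 1 / r :=
  rRegular_principal_curvature_bound_general d r hr X ν hν x hx dn hdn v hv hvt k hk
end

section
/- The integral 18·∫₀^{π/4} ∫₀^{arccos(cosθ/√(1+cos²θ))} (cosθ − sinθ) cosφ sin²φ dφ dθ equals 3√3 − 3√2. -/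
/-!
The inner integral is elementary: `∫₀^a cos φ sin² φ dφ = sin³ a / 3`, and the upper limit
`a = arccos (c / √(1 + c²))` has `sin a = 1 / √(1 + c²)`. This leaves
`∫₀^{π/4} (cos θ - sin θ) / (3 (1 + cos² θ)^{3/2}) dθ`, whose integrand is the derivative of
`(sin θ + 2 cos θ) / (6 √(1 + cos² θ))`.
-/

open Real

theorem sin_arccos_div_sqrt_one_add_sq (c : ℝ) :
    sin (arccos (c / √(1 + c ^ 2))) = 1 / √(1 + c ^ 2) := by
  have hpos : 0 < 1 + c ^ 2 := by positivity
  rw [sin_arccos, div_pow, sq_sqrt hpos.le, one_div, ← sqrt_inv]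
  congr 1
  field_simp
  ring

theorem integral_mul_cos_mul_sin_sq_arccos (k c : ℝ) :
    ∫ φ in (0 : ℝ)..arccos (c / √(1 + c ^ 2)), k * cos φ * sin φ ^ 2 =
      k / (3 * √(1 + c ^ 2) ^ 3) := by
  simp_rw [mul_assoc, mul_comm (cos _)]
  rw [intervalIntegral.integral_const_mul, integral_sin_sq_mul_cos,
    sin_arccos_div_sqrt_one_add_sq, sin_zero]
  field_simp
  ring

theorem HasDerivAt.div_sqrt {f g : ℝ → ℝ} {f' g' x : ℝ} (hf : HasDerivAt f f' x)
    (hg : HasDerivAt g g' x) (hx : 0 < g x) :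
    HasDerivAt (fun y => f y / √(g y)) ((f' * g x - f x * g' / 2) / √(g x) ^ 3) x := by
  have hs : 0 < √(g x) := sqrt_pos.mpr hx
  refine (hf.div (hg.sqrt hx.ne') hs.ne').congr_deriv ?_
  rw [sq_sqrt hx.le]
  field_simp
  rw [sq_sqrt hx.le]
  ring

theorem hasDerivAt_sin_add_two_mul_cos_div_sqrt (θ : ℝ) :
    HasDerivAt (fun θ => (sin θ + 2 * cos θ) / 6 / √(1 + cos θ ^ 2))
      ((cos θ - sin θ) / (3 * √(1 + cos θ ^ 2) ^ 3)) θ := by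
  have hnum : HasDerivAt (fun θ => (sin θ + 2 * cos θ) / 6) ((cos θ - 2 * sin θ) / 6) θ := by
    refine (((hasDerivAt_sin θ).fun_add ((hasDerivAt_cos θ).const_mul 2)).div_const 6
      ).congr_deriv ?_
    ring
  have hden : HasDerivAt (fun θ => 1 + cos θ ^ 2) (2 * cos θ * -sin θ) θ := by
    refine (((hasDerivAt_cos θ).fun_pow 2).const_add 1).congr_deriv ?_
    ring
  refine (hnum.div_sqrt hden (by positivity)).congr_deriv ?_
  rw [mul_comm 3, ← div_div, div_right_comm]
  congr 1
  linear_combination (cos θ / 6) * sin_sq_add_cos_sq θ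

theorem integral_cos_sub_sin_div_sqrt_one_add_cos_sq_pow_three :
    ∫ θ in (0 : ℝ)..(π / 4), (cos θ - sin θ) / (3 * √(1 + cos θ ^ 2) ^ 3) =
      √3 / 6 - √2 / 6 := by
  have hcont : Continuous fun θ => (cos θ - sin θ) / (3 * √(1 + cos θ ^ 2) ^ 3) :=
    by fun_prop (disch := intro θ; positivity)
  rw [intervalIntegral.integral_eq_sub_of_hasDerivAt
    (fun θ _ => hasDerivAt_sin_add_two_mul_cos_div_sqrt θ) (hcont.intervalIntegrable _ _)]
  simp only [sin_pi_div_four, cos_pi_div_four, sin_zero, cos_zero]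
  have hsq2 : √2 ^ 2 = 2 := sq_sqrt (by norm_num)
  have hsq3 : √3 ^ 2 = 3 := sq_sqrt (by norm_num)
  have hsqrt_three_halves : √(1 + (√2 / 2) ^ 2) = √3 / √2 := by
    rw [div_pow, hsq2, ← sqrt_div (by norm_num)]
    norm_num
  rw [hsqrt_three_halves]
  field_simp
  norm_num
  linear_combination (-2 * √2) * hsq3 + 2 * √3 * hsq2

/-- The explicit double integral evaluating the coefficient `μ̄₂ = 3√3 - 3√2` in the 3D
isotropic configuration computation. -/
theorem mu_bar_two_integral :
    18 * ∫ θ in (0 : ℝ)..(π / 4),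
      ∫ φ in (0 : ℝ)..(arccos (cos θ / sqrt (1 + cos θ ^ 2))),
        ((cos θ - sin θ) * cos φ * sin φ ^ 2) =
      3 * sqrt 3 - 3 * sqrt 2 := by
  simp_rw [integral_mul_cos_mul_sin_sq_arccos,
    integral_cos_sub_sin_div_sqrt_one_add_cos_sq_pow_three]
  ring
end

section
/- There is no choice of real weights w₁, w₂, w₃, w₅, w₆, w₇ satisfying simultaneously the four equations: (3−√3)(w₁−w₇) + (3√3−3√2)(w₂−w₆) + (−3+6√2−3√3)(w₃−w₅) = 1; 2(w₂−w₆) = 1; √2(w₁−w₇) + √2(w₃−w₅) = 1; √3(w₁−w₇) + √3(w₂−w₆) − √3(w₃−w₅) = 1. -/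
open Real

/-- The linear incompatibility at the core of the non-existence of asymptotically
unbiased local estimators for `V₁` in dimension 3: no real weights satisfy the four
equations simultaneously. -/
theorem no_weights_3d :
    ¬ ∃ w₁ w₂ w₃ w₅ w₆ w₇ : ℝ,
      (3 - sqrt 3) * (w₁ - w₇) + (3 * sqrt 3 - 3 * sqrt 2) * (w₂ - w₆) +
          (-3 + 6 * sqrt 2 - 3 * sqrt 3) * (w₃ - w₅) = 1 ∧
      2 * (w₂ - w₆) = 1 ∧
      sqrt 2 * (w₁ - w₇) + sqrt 2 * (w₃ - w₅) = 1 ∧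
      sqrt 3 * (w₁ - w₇) + sqrt 3 * (w₂ - w₆) - sqrt 3 * (w₃ - w₅) = 1 := by
  rintro ⟨w₁, w₂, w₃, w₅, w₆, w₇, h1, h2, h3, h4⟩
  set x := w₁ - w₇
  set y := w₂ - w₆
  set z := w₃ - w₅
  have s2 : sqrt 2 ^ 2 = 2 := sq_sqrt (by norm_num)
  have s3 : sqrt 3 ^ 2 = 3 := sq_sqrt (by norm_num)
  have p2 : (1:ℝ) < sqrt 2 := by nlinarith [sqrt_nonneg 2]
  have p3 : (1:ℝ) < sqrt 3 := by nlinarith [sqrt_nonneg 3]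
  -- key relation obtained by eliminating x, y, z from the four equations
  have key : sqrt 3 * (sqrt 2 - 1) = 3/4 := by
    have e3 : 2 * (x + z) = sqrt 2 := by nlinarith [h3]
    have e4 : 3 * (x + y - z) = sqrt 3 := by nlinarith [h4]
    nlinarith [h1, h2, e3, e4, mul_self_nonneg (sqrt 2 - sqrt 3)]
  -- squaring `key` forces sqrt 2 = 45/32, contradicting (sqrt 2)^2 = 2
  nlinarith [key, mul_self_nonneg (sqrt 2 * sqrt 3 - 45/32 * sqrt 3)]
end
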